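/- Let D ∈ M_{k×l}(ℝ) be a non-branching matrix with no zero columns. Then rank(D) = l − r, where r is the number of connected components C of the column graph of D for which the submatrix of D consisting of the columns indexed by C has no row with exactly one non-zero entry and is orientable. -/

import Mathlib

open scoped Classical

/-- A real matrix is *non-branching* if all its entries lie in `{-1, 0, 1}` and every
row has at most two non-zero entries. -/
def NonBranching {k l : ℕ} (D : Matrix (Fin k) (Fin l) ℝ) : Prop :=
  (∀ i j, D i j = -1 ∨ D i j = 0 ∨ D i j = 1) ∧
    ∀ i : Fin k, (Finset.univ.filter fun j => D i j ≠ 0).card ≤ 2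

/-- The `j`-th column of a matrix, as a vector. -/
def col {k l : ℕ} (M : Matrix (Fin k) (Fin l) ℝ) (j : Fin l) : Fin k → ℝ :=
  fun i => M i j

/-- The *column graph* of a matrix `D`: the simple graph on the column indices in which
two distinct columns are adjacent iff some row has a non-zero entry in both columns. -/
def columnGraph {k l : ℕ} (D : Matrix (Fin k) (Fin l) ℝ) : SimpleGraph (Fin l) where
  Adj j₁ j₂ := j₁ ≠ j₂ ∧ ∃ i : Fin k, D i j₁ ≠ 0 ∧ D i j₂ ≠ 0
  symm := by
    constructor
    intro a b h
    exact ⟨h.1.symm, h.2.imp fun i hi => ⟨hi.2, hi.1⟩⟩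
  loopless := by
    constructor
    intro a h
    exact h.1 rfl

/-- The connected component of `j` in the column graph of `D` is *regulable*: the submatrix
of `D` on the columns of the component has no row with exactly one non-zero entry, and it is
orientable (the columns can be sign-flipped so every row of the submatrix contains at most
one `1` and at most one `-1`). -/
def RegulableComp {k l : ℕ} (D : Matrix (Fin k) (Fin l) ℝ) (j : Fin l) : Prop :=
  (∀ i : Fin k, (Finset.univ.filter fun j' =>
      (columnGraph D).Reachable j j' ∧ D i j' ≠ 0).card ≠ 1) ∧
  ∃ ε : Fin l → ℝ, (∀ j', ε j' = 1 ∨ ε j' = -1) ∧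
    ∀ i : Fin k,
      (Finset.univ.filter fun j' => (columnGraph D).Reachable j j' ∧
        D i j' * ε j' = 1).card ≤ 1 ∧
      (Finset.univ.filter fun j' => (columnGraph D).Reachable j j' ∧
        D i j' * ε j' = -1).card ≤ 1

/-!
Each row of `D` has at most two non-zero entries, both `±1`, so a kernel vector `x` satisfies
`|x a| = |x b|` for adjacent columns `a, b`, and `|x|` is constant on each component of the column
graph. If `x` does not vanish on a component, a row with a single non-zero entry there would force it
to vanish, and the signs of `x` orient the component. Conversely, the orienting signs of a regulable
component form a kernel vector supported on it. So evaluation at one representative of each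
regulable component is an isomorphism from `ker D` onto `ℝ^r`, and rank–nullity gives the claim.
-/

lemma Finset.sum_eq_zero_of_card_filter_le_one {ι : Type*} (s : Finset ι) (f : ι → ℝ)
    (hf : ∀ j ∈ s, f j = 1 ∨ f j = -1) (h₁ : (s.filter (f · = 1)).card ≤ 1)
    (h₂ : (s.filter (f · = -1)).card ≤ 1) (hs : s.card ≠ 1) : ∑ j ∈ s, f j = 0 := by
  have hneg : s.filter (¬f · = 1) = s.filter (f · = -1) :=
    Finset.filter_congr fun j hj => by rcases hf j hj with h | h <;> norm_num [h]
  have hcard := Finset.card_filter_add_card_filter_not (s := s) (f · = 1)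
  rw [hneg] at hcard
  have heq : (s.filter (f · = 1)).card = (s.filter (f · = -1)).card := by omega
  rw [← Finset.sum_filter_add_sum_filter_not s (f · = 1), hneg,
    Finset.sum_congr rfl fun j hj => (Finset.mem_filter.mp hj).2,
    Finset.sum_congr rfl fun j hj => (Finset.mem_filter.mp hj).2]
  simp [heq]

lemma SimpleGraph.exists_reachable_forall_le {V : Type*} [Fintype V] [LinearOrder V]
    (G : SimpleGraph V) (v : V) : ∃ m, G.Reachable v m ∧ ∀ w, G.Reachable m w → w ≤ m := by
  obtain ⟨m, hm, hmax⟩ := (Finset.univ.filter (G.Reachable v)).exists_max_image id ⟨v, by simp⟩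
  simp only [Finset.mem_filter, Finset.mem_univ, true_and, id] at hm hmax
  exact ⟨m, hm, fun w hw => hmax w (hm.trans hw)⟩

section

open Matrix

variable {k l : ℕ} {D : Matrix (Fin k) (Fin l) ℝ}

lemma NonBranching.abs_eq_one (hD : NonBranching D) {i : Fin k} {j : Fin l} (h : D i j ≠ 0) :
    |D i j| = 1 := by
  rcases hD.1 i j with h1 | h1 | h1 <;> simp_all

lemma NonBranching.eq_or_eq_of_ne_zero (hD : NonBranching D) {i : Fin k} {a b c : Fin l}
    (ha : D i a ≠ 0) (hb : D i b ≠ 0) (hab : a ≠ b) (hc : D i c ≠ 0) : c = a ∨ c = b := by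
  by_contra! hcon
  have hsub : ({a, b, c} : Finset (Fin l)) ⊆ Finset.univ.filter fun j => D i j ≠ 0 := by
    intro x hx
    simp only [Finset.mem_insert, Finset.mem_singleton] at hx
    rcases hx with rfl | rfl | rfl <;> simpa
  have hcard : ({a, b, c} : Finset (Fin l)).card = 3 := by
    rw [Finset.card_eq_three]
    exact ⟨a, b, c, hab, hcon.1.symm, hcon.2.symm, rfl⟩
  have := (Finset.card_le_card hsub).trans (hD.2 i)
  omega

lemma columnGraph_reachable_of_ne_zero {i : Fin k} {a b : Fin l} (ha : D i a ≠ 0)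
    (hb : D i b ≠ 0) : (columnGraph D).Reachable a b := by
  by_cases hab : a = b
  · exact hab ▸ SimpleGraph.Reachable.refl a
  · exact SimpleGraph.Adj.reachable ⟨hab, i, ha, hb⟩

lemma sum_mul_eq_zero_of_mulVec_eq_zero {x : Fin l → ℝ} (hx : D *ᵥ x = 0) (i : Fin k)
    {s : Finset (Fin l)} (hs : ∀ j, D i j ≠ 0 → j ∈ s) : ∑ j ∈ s, D i j * x j = 0 := by
  rw [Finset.sum_subset (Finset.subset_univ s)]
  · exact congrFun hx i
  · intro j _ hj
    rw [not_imp_comm.mp (hs j) hj, zero_mul]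

lemma NonBranching.add_eq_zero_of_mulVec_eq_zero (hD : NonBranching D) {x : Fin l → ℝ}
    (hx : D *ᵥ x = 0) {i : Fin k} {a b : Fin l} (hab : a ≠ b) (ha : D i a ≠ 0)
    (hb : D i b ≠ 0) : D i a * x a + D i b * x b = 0 := by
  rw [← Finset.sum_pair (f := fun j => D i j * x j) hab]
  refine sum_mul_eq_zero_of_mulVec_eq_zero hx i fun c hc => ?_
  simpa using hD.eq_or_eq_of_ne_zero ha hb hab hc

lemma NonBranching.abs_eq_of_reachable (hD : NonBranching D) {x : Fin l → ℝ}
    (hx : D *ᵥ x = 0) {a b : Fin l} (h : (columnGraph D).Reachable a b) : |x a| = |x b| := by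
  obtain ⟨w⟩ := h
  induction w with
  | nil => rfl
  | @cons u v _ hadj _ ih =>
    obtain ⟨huv, i, hu, hv⟩ := hadj
    have hrow := hD.add_eq_zero_of_mulVec_eq_zero hx huv hu hv
    have : |D i u * x u| = |D i v * x v| := by rw [eq_neg_of_add_eq_zero_left hrow, abs_neg]
    rwa [abs_mul, abs_mul, hD.abs_eq_one hu, hD.abs_eq_one hv, one_mul, one_mul, ih] at this

lemma NonBranching.eq_of_mul_eq_of_mulVec_eq_zero (hD : NonBranching D) {x : Fin l → ℝ}
    (hx : D *ᵥ x = 0) {i : Fin k} {a b : Fin l} (hab : D i a * x a = D i b * x b)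
    (hne : D i a * x a ≠ 0) : a = b := by
  by_contra h
  have hrow := hD.add_eq_zero_of_mulVec_eq_zero hx h (left_ne_zero_of_mul hne)
    (left_ne_zero_of_mul (hab ▸ hne))
  exact hne (by linarith)

lemma regulableComp_congr {a b : Fin l} (h : (columnGraph D).Reachable a b) :
    RegulableComp D a ↔ RegulableComp D b := by
  have heq : (columnGraph D).Reachable a = (columnGraph D).Reachable b :=
    funext fun j => propext ⟨h.symm.trans, h.trans⟩
  unfold RegulableComp
  simp only [heq]

lemma NonBranching.regulableComp_of_mulVec_eq_zero (hD : NonBranching D) {x : Fin l → ℝ}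
    (hx : D *ᵥ x = 0) {j₀ : Fin l} (h₀ : x j₀ ≠ 0) : RegulableComp D j₀ := by
  have hreach_ne {j} (h : (columnGraph D).Reachable j₀ j) : x j ≠ 0 := by
    rw [← abs_ne_zero, ← hD.abs_eq_of_reachable hx h]
    exact abs_ne_zero.mpr h₀
  refine ⟨fun i hcard => ?_, ?_⟩
  · obtain ⟨a, ha⟩ := Finset.card_eq_one.mp hcard
    have hmem : a ∈ Finset.univ.filter fun j => (columnGraph D).Reachable j₀ j ∧ D i j ≠ 0 := by
      simp [ha]
    simp only [Finset.mem_filter, Finset.mem_univ, true_and] at hmem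
    refine hreach_ne hmem.1 (mul_eq_zero.mp ?_ |>.resolve_left hmem.2)
    rw [← Finset.sum_singleton (fun j => D i j * x j) a]
    refine sum_mul_eq_zero_of_mulVec_eq_zero hx i fun c hc => ?_
    rw [← ha]
    simpa using ⟨hmem.1.trans (columnGraph_reachable_of_ne_zero hmem.2 hc), hc⟩
  let ε : Fin l → ℝ := fun j => if (columnGraph D).Reachable j₀ j then x j / x j₀ else 1
  have hcard (i : Fin k) {c : ℝ} (hc : c ≠ 0) :
      (Finset.univ.filter fun j => (columnGraph D).Reachable j₀ j ∧ D i j * ε j = c).card ≤ 1 := by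
    have hval {j} (hj : (columnGraph D).Reachable j₀ j) (hj' : D i j * ε j = c) :
        D i j * x j = c * x j₀ := by
      simp only [ε, if_pos hj] at hj'
      rw [← hj']
      field_simp
    refine Finset.card_le_one.mpr fun a ha b hb => ?_
    simp only [Finset.mem_filter, Finset.mem_univ, true_and] at ha hb
    refine hD.eq_of_mul_eq_of_mulVec_eq_zero hx (i := i) ?_ ?_
    · rw [hval ha.1 ha.2, hval hb.1 hb.2]
    · rw [hval ha.1 ha.2]
      exact mul_ne_zero hc h₀
  refine ⟨ε, fun j => ?_, fun i => ⟨hcard i one_ne_zero, hcard i (neg_ne_zero.mpr one_ne_zero)⟩⟩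
  by_cases hj : (columnGraph D).Reachable j₀ j
  · have : |ε j| = 1 := by
      simp only [ε, if_pos hj, abs_div, ← hD.abs_eq_of_reachable hx hj]
      exact div_self (abs_ne_zero.mpr h₀)
    exact (abs_eq zero_le_one).mp this
  · simp [ε, hj]

lemma NonBranching.exists_mulVec_eq_zero_of_regulableComp (hD : NonBranching D) {j₀ : Fin l}
    (hreg : RegulableComp D j₀) :
    ∃ w : Fin l → ℝ, D *ᵥ w = 0 ∧ w j₀ = 1 ∧ ∀ j, ¬(columnGraph D).Reachable j₀ j → w j = 0 := by
  obtain ⟨hsingle, ε, hε, horient⟩ := hreg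
  let v : Fin l → ℝ := fun j => if (columnGraph D).Reachable j₀ j then ε j else 0
  have hv : D *ᵥ v = 0 := by
    funext i
    let A := Finset.univ.filter fun j => (columnGraph D).Reachable j₀ j ∧ D i j ≠ 0
    have hA {j} (hj : j ∈ A) : (columnGraph D).Reachable j₀ j ∧ D i j ≠ 0 := by simpa [A] using hj
    have hrow : (D *ᵥ v) i = ∑ j ∈ A, D i j * ε j := by
      rw [mulVec, dotProduct, ← Finset.sum_subset (Finset.subset_univ A)]
      · exact Finset.sum_congr rfl fun j hj => by simp [v, (hA hj).1]
      · intro j _ hj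
        by_cases hr : (columnGraph D).Reachable j₀ j
        · simp_all [A]
        · simp [v, hr]
    rw [hrow, Pi.zero_apply]
    refine Finset.sum_eq_zero_of_card_filter_le_one A _ (fun j hj => ?_)
      ((Finset.card_le_card fun j hj => ?_).trans (horient i).1)
      ((Finset.card_le_card fun j hj => ?_).trans (horient i).2) (hsingle i)
    · rw [← abs_eq zero_le_one, abs_mul, hD.abs_eq_one (hA hj).2]
      rcases hε j with h | h <;> simp [h]
    all_goals simp_all [A]
  refine ⟨ε j₀ • v, by rw [mulVec_smul, hv, smul_zero], ?_, fun j hj => ?_⟩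
  · rcases hε j₀ with h | h <;> simp [v, h]
  · simp [v, hj]

noncomputable def regulableReps (D : Matrix (Fin k) (Fin l) ℝ) : Finset (Fin l) :=
  Finset.univ.filter fun j => RegulableComp D j ∧ ∀ j', (columnGraph D).Reachable j j' → j' ≤ j

lemma mem_regulableReps {j : Fin l} :
    j ∈ regulableReps D ↔ RegulableComp D j ∧ ∀ j', (columnGraph D).Reachable j j' → j' ≤ j := by
  simp [regulableReps]

lemma NonBranching.eq_zero_of_mulVec_eq_zero (hD : NonBranching D) {x : Fin l → ℝ}
    (hx : D *ᵥ x = 0) (hreps : ∀ j ∈ regulableReps D, x j = 0) : x = 0 := by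
  funext j₀
  by_contra h₀
  obtain ⟨m, hm, hmax⟩ := (columnGraph D).exists_reachable_forall_le j₀
  have hmem : m ∈ regulableReps D :=
    mem_regulableReps.mpr
      ⟨(regulableComp_congr hm).mp (hD.regulableComp_of_mulVec_eq_zero hx h₀), hmax⟩
  have := hD.abs_eq_of_reachable hx hm
  rw [hreps m hmem, abs_zero, abs_eq_zero] at this
  exact h₀ this

lemma NonBranching.finrank_ker_mulVecLin (hD : NonBranching D) :
    Module.finrank ℝ (LinearMap.ker D.mulVecLin) = (regulableReps D).card := by
  let φ := (LinearMap.funLeft ℝ ℝ ((↑) : regulableReps D → Fin l)).comp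
    (LinearMap.ker D.mulVecLin).subtype
  have hinj : Function.Injective φ := by
    refine (injective_iff_map_eq_zero φ).mpr fun x hx => Subtype.ext ?_
    exact hD.eq_zero_of_mulVec_eq_zero x.2 fun j hj => congrFun hx ⟨j, hj⟩
  have hsurj : Function.Surjective φ := by
    intro t
    have hreps (j : regulableReps D) := mem_regulableReps.mp j.2
    choose w hw using fun j : regulableReps D =>
      hD.exists_mulVec_eq_zero_of_regulableComp (hreps j).1
    refine ⟨⟨∑ j, t j • w j, ?_⟩, funext fun j => ?_⟩
    · exact Submodule.sum_mem _ fun j _ => Submodule.smul_mem _ _ (hw j).1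
    · change (∑ j', t j' • w j') j = t j
      rw [Finset.sum_apply, Finset.sum_eq_single j]
      · simp [(hw j).2.1]
      · intro j' _ hne
        have hnr : ¬(columnGraph D).Reachable j' j := fun h =>
          hne (Subtype.ext (le_antisymm ((hreps j).2 _ h.symm) ((hreps j').2 _ h)))
        simp [(hw j').2.2 _ hnr]
      · simp
  rw [(LinearEquiv.ofBijective φ ⟨hinj, hsurj⟩).finrank_eq, Module.finrank_fintype_fun_eq_card,
    Fintype.card_coe]

end

theorem stmt9_general {k l : ℕ} (D : Matrix (Fin k) (Fin l) ℝ)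
    (hD : NonBranching D) :
    D.rank = l - (Finset.univ.filter fun j : Fin l =>
      RegulableComp D j ∧ ∀ j' : Fin l, (columnGraph D).Reachable j j' → j' ≤ j).card := by
  have hrank := LinearMap.finrank_range_add_finrank_ker D.mulVecLin
  rw [Module.finrank_fin_fun, hD.finrank_ker_mulVecLin] at hrank
  change Module.finrank ℝ (LinearMap.range D.mulVecLin) = l - (regulableReps D).card
  omega

/-- For a non-branching matrix `D` with no zero columns,
`rank D = l - r` where `r` is the number of regulable connected components of the column
graph of `D` (each component is counted via its largest column index). -/
theorem stmt9 {k l : ℕ} (D : Matrix (Fin k) (Fin l) ℝ)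
    (hD : NonBranching D) (hcols : ∀ j, col D j ≠ 0) :
    D.rank = l - (Finset.univ.filter fun j : Fin l =>
      RegulableComp D j ∧ ∀ j' : Fin l, (columnGraph D).Reachable j j' → j' ≤ j).card :=
  stmt9_general D hD
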